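/- Let Q ∈ F_q[T] be a prime polynomial and let χ_2 be the quadratic character modulo Q (q odd). Then the coefficient of u^n in L(u^3, χ_2) · Z(u^2)(1 - u^{2 deg Q}) / (Z(u^6)(1 - u^{6 deg Q})) equals Σ_{f ∈ M_n} α_2(f) χ_2(f), where α_2 is the indicator of square-full polynomials. -/

import Mathlib

/-!
Write `B(u) = ∑_{b monic squarefree} χ₂(b) u^{3 deg b}`. Every monic `f` is uniquely `b c²` with
`b` squarefree, and `χ₂(b c²) = χ₂(b) χ₀(c)` because `χ₂² = χ₀`; hence `L(u³, χ₂) = B(u) L(u⁶, χ₀)`.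
Every square-full monic `f` is uniquely `a² b³` with `b` squarefree, and `χ₂(a² b³) = χ₀(a) χ₂(b)`
because `χ₂³ = χ₂`; hence the right-hand side is `L(u², χ₀) B(u)`. Both factorizations are
bijections on prime exponents. Finally `L(u, χ₀) = Z(u)(1 - u^{deg Q})`, and eliminating `B`
gives the identity.
-/

/-- A monic polynomial is square-full if every irreducible polynomial dividing it
divides it at least twice. -/
def IsSquareFullPoly {F : Type*} [Field F] (f : Polynomial F) : Prop :=
  ∀ P : Polynomial F, Irreducible P → P ∣ f → P ^ 2 ∣ f

/-- The `n`-th coefficient of the L-function of a character `χ` mod `Q`: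
`Σ_{f ∈ M_n} χ(f)`. -/
noncomputable def Mcoeff {F : Type} [Field F] [Fintype F] (Q : Polynomial F)
    (χ : MulChar (Polynomial F ⧸ Ideal.span {Q}) ℂ) (n : ℕ) : ℂ :=
  ∑ᶠ f : {f : Polynomial F // f.Monic ∧ f.natDegree = n},
    χ (Ideal.Quotient.mk (Ideal.span {Q}) f.1)

/-- The power series `L(u^k, χ)`. -/
noncomputable def Lpow {F : Type} [Field F] [Fintype F] (Q : Polynomial F)
    (χ : MulChar (Polynomial F ⧸ Ideal.span {Q}) ℂ) (k : ℕ) : PowerSeries ℂ :=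
  PowerSeries.mk fun n => if k ∣ n then Mcoeff Q χ (n / k) else 0

open Set Finset

theorem finsum_mem_mul_finsum_mem {α β R : Type*} [CommSemiring R] {s : Set α} {t : Set β}
    (hs : s.Finite) (ht : t.Finite) (f : α → R) (g : β → R) :
    (∑ᶠ a ∈ s, f a) * (∑ᶠ b ∈ t, g b) = ∑ᶠ x ∈ s ×ˢ t, f x.1 * g x.2 := by
  rw [finsum_mem_eq_finite_toFinset_sum _ hs, finsum_mem_eq_finite_toFinset_sum _ ht,
    finsum_mem_eq_finite_toFinset_sum _ (hs.prod ht), Finset.sum_mul_sum,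
    ← Set.Finite.toFinset_prod hs ht, Finset.sum_product]

namespace PowerSeries

section GenSeries

variable {α β γ R : Type*} [CommSemiring R]

/-- `∑_{a ∈ A} v a X ^ (w a)`; a coefficient whose fibre `{a ∈ A | w a = n}` is infinite is the
junk value `0` of `finsum`. -/
noncomputable def genSeries (A : Set α) (w : α → ℕ) (v : α → R) : R⟦X⟧ :=
  mk fun n => ∑ᶠ a ∈ {a ∈ A | w a = n}, v a

theorem coeff_genSeries (A : Set α) (w : α → ℕ) (v : α → R) (n : ℕ) :
    coeff n (genSeries A w v) = ∑ᶠ a ∈ {a ∈ A | w a = n}, v a :=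
  coeff_mk _ _

theorem genSeries_congr {A : Set α} {w : α → ℕ} {v v' : α → R} (h : ∀ a ∈ A, v a = v' a) :
    genSeries A w v = genSeries A w v' :=
  PowerSeries.ext fun _ => finsum_mem_congr rfl fun a ha => h a ha.1

theorem genSeries_zero (A : Set α) (w : α → ℕ) : genSeries A w (0 : α → R) = 0 :=
  PowerSeries.ext fun n => by rw [coeff_genSeries, map_zero]; exact finsum_mem_zero _

theorem genSeries_singleton (a : α) (w : α → ℕ) (v : α → R) :
    genSeries {a} w v = monomial (w a) (v a) := by
  ext n
  rw [coeff_genSeries, coeff_monomial]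
  by_cases h : n = w a
  · rw [if_pos h, sep_eq_self_iff_mem_true.mpr fun x hx => (mem_singleton_iff.mp hx ▸ h).symm]
    exact finsum_mem_singleton
  · rw [if_neg h, sep_eq_empty_iff_mem_false.mpr fun x hx => mem_singleton_iff.mp hx ▸ Ne.symm h]
    exact finsum_mem_empty

theorem genSeries_sep_add_genSeries_sep_not {A : Set α} {w : α → ℕ} (v : α → R) (p : α → Prop)
    (hA : ∀ n, {a ∈ A | w a = n}.Finite) :
    genSeries {a ∈ A | p a} w v + genSeries {a ∈ A | ¬p a} w v = genSeries A w v := by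
  ext n
  have h₁ : {a ∈ {a ∈ A | p a} | w a = n} = {a ∈ A | w a = n} ∩ {a | p a} := by
    ext; simp only [mem_inter_iff, mem_ofPred_eq]; tauto
  have h₂ : {a ∈ {a ∈ A | ¬p a} | w a = n} = {a ∈ A | w a = n} \ {a | p a} := by
    ext; simp only [mem_sdiff, mem_ofPred_eq]; tauto
  rw [map_add, coeff_genSeries, coeff_genSeries, coeff_genSeries, h₁, h₂,
    finsum_mem_inter_add_sdiff _ (hA n)]

theorem genSeries_mul_genSeries {A : Set α} {B : Set β} {C : Set γ} {wA : α → ℕ} {wB : β → ℕ}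
    {wC : γ → ℕ} {vA : α → R} {vB : β → R} {vC : γ → R} {μ : α × β → γ}
    (hμ : BijOn μ (A ×ˢ B) C) (hw : ∀ x ∈ A ×ˢ B, wC (μ x) = wA x.1 + wB x.2)
    (hv : ∀ x ∈ A ×ˢ B, vC (μ x) = vA x.1 * vB x.2)
    (hA : ∀ n, {a ∈ A | wA a = n}.Finite) (hB : ∀ n, {b ∈ B | wB b = n}.Finite) :
    genSeries A wA vA * genSeries B wB vB = genSeries C wC vC := by
  set fibre : ℕ × ℕ → Set (α × β) := fun ij => {a ∈ A | wA a = ij.1} ×ˢ {b ∈ B | wB b = ij.2}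
  have hfibre_sub (ij : ℕ × ℕ) : fibre ij ⊆ A ×ˢ B := fun x hx => ⟨hx.1.1, hx.2.1⟩
  ext n
  have hC : {c ∈ C | wC c = n} = μ '' ⋃ ij ∈ (antidiagonal n : Set (ℕ × ℕ)), fibre ij := by
    ext c
    simp only [mem_image, mem_iUnion, mem_ofPred_eq, Finset.mem_coe,
      HasAntidiagonal.mem_antidiagonal]
    constructor
    · rintro ⟨hc, rfl⟩
      obtain ⟨x, hx, rfl⟩ := hμ.surjOn hc
      exact ⟨x, ⟨(wA x.1, wB x.2), (hw x hx).symm, ⟨hx.1, rfl⟩, ⟨hx.2, rfl⟩⟩, rfl⟩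
    · rintro ⟨x, ⟨ij, hij, hx⟩, rfl⟩
      refine ⟨hμ.mapsTo (hfibre_sub ij hx), ?_⟩
      rw [hw x (hfibre_sub ij hx), hx.1.2, hx.2.2, hij]
  have hdisj : (antidiagonal n : Set (ℕ × ℕ)).PairwiseDisjoint fibre := by
    intro ij _ kl _ hne
    refine Set.disjoint_left.mpr fun x hx hx' => hne (Prod.ext ?_ ?_)
    · exact hx.1.2.symm.trans hx'.1.2
    · exact hx.2.2.symm.trans hx'.2.2
  rw [coeff_mul, coeff_genSeries, hC,
    finsum_mem_image (hμ.injOn.mono (iUnion₂_subset fun ij _ => hfibre_sub ij)),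
    finsum_mem_biUnion hdisj (Finset.finite_toSet _) fun ij _ => (hA _).prod (hB _),
    finsum_mem_coe_finset]
  refine Finset.sum_congr rfl fun ij _ => ?_
  rw [coeff_genSeries, coeff_genSeries, finsum_mem_mul_finsum_mem (hA _) (hB _)]
  exact finsum_mem_congr rfl fun x hx => (hv x (hfibre_sub ij hx)).symm

end GenSeries

theorem expand_genSeries {α R : Type*} [CommRing R] {k : ℕ} (hk : k ≠ 0) (A : Set α)
    (w : α → ℕ) (v : α → R) :
    expand k hk (genSeries A w v) = genSeries A (fun a => k * w a) v := by
  ext n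
  rw [coeff_expand, coeff_genSeries A fun a => k * w a]
  split_ifs with h
  · obtain ⟨m, rfl⟩ := h
    rw [coeff_genSeries, Nat.mul_div_cancel_left _ (Nat.pos_of_ne_zero hk)]
    simp only [Nat.mul_left_cancel_iff (Nat.pos_of_ne_zero hk)]
  · rw [show {a ∈ A | k * w a = n} = ∅ from
      eq_empty_of_forall_notMem fun a ha => h ⟨w a, ha.2.symm⟩, finsum_mem_empty]

theorem mk_pow_mul_one_sub_C_mul_X {R : Type*} [CommRing R] (a : R) :
    (mk fun n => a ^ n) * (1 - C a * X) = 1 := by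
  have := congrArg (rescale a) (mk_one_mul_one_sub_eq_one R)
  simpa only [map_mul, map_sub, map_one, rescale_mk, rescale_X, Pi.one_apply, mul_one]
    using this

end PowerSeries

namespace UniqueFactorizationMonoid

open Multiset

variable {α : Type*} [CommMonoidWithZero α] [StrongNormalizationMonoid α]

theorem normalize_multiset_prod_eq_self {s : Multiset α} (h : ∀ p ∈ s, normalize p = p) :
    normalize s.prod = s.prod := by
  have := prod_hom s (normalizeHom (α := α))
  rw [coe_normalizeHom] at this
  rw [← this, map_congr rfl h, map_id']

variable [UniqueFactorizationMonoid α] [DecidableEq α]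

theorem eq_of_count_normalizedFactors_eq {a b : α} (ha : a ≠ 0) (hb : b ≠ 0)
    (ha' : normalize a = a) (hb' : normalize b = b)
    (h : ∀ p, count p (normalizedFactors a) = count p (normalizedFactors b)) : a = b := by
  rw [← ha', ← hb', ← prod_normalizedFactors_eq ha, ← prod_normalizedFactors_eq hb,
    Multiset.ext.mpr h]

theorem count_normalizedFactors_mul {a b : α} (ha : a ≠ 0) (hb : b ≠ 0) (p : α) :
    count p (normalizedFactors (a * b)) =
      count p (normalizedFactors a) + count p (normalizedFactors b) := by
  rw [normalizedFactors_mul ha hb, count_add]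

theorem count_normalizedFactors_pow (a : α) (n : ℕ) (p : α) :
    count p (normalizedFactors (a ^ n)) = n * count p (normalizedFactors a) := by
  rw [normalizedFactors_pow, count_nsmul]

theorem pow_dvd_iff_le_count_normalizedFactors {p a : α} (hp : Irreducible p) (ha : a ≠ 0)
    (n : ℕ) : p ^ n ∣ a ↔ n ≤ count (normalize p) (normalizedFactors a) := by
  rw [pow_dvd_iff_le_emultiplicity, le_emultiplicity_iff_replicate_le_normalizedFactors hp ha,
    le_count_iff_replicate_le]

theorem squarefree_iff_count_normalizedFactors_le_one {a : α} (ha : a ≠ 0) :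
    Squarefree a ↔ ∀ p, count p (normalizedFactors a) ≤ 1 := by
  rw [squarefree_iff_nodup_normalizedFactors ha, nodup_iff_count_le_one]

theorem forall_sq_dvd_iff_count_normalizedFactors_ne_one {a : α} (ha : a ≠ 0) :
    (∀ p, Irreducible p → p ∣ a → p ^ 2 ∣ a) ↔ ∀ p, count p (normalizedFactors a) ≠ 1 := by
  constructor
  · intro h p hp
    by_cases hpa : p ∈ normalizedFactors a
    · have hirr := irreducible_of_normalized_factor p hpa
      have hnorm := normalize_normalized_factor p hpa
      have := (pow_dvd_iff_le_count_normalizedFactors hirr ha 2).mp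
        (h p hirr (dvd_of_mem_normalizedFactors hpa))
      rw [hnorm] at this
      omega
    · exact hpa (count_pos.mp (by omega))
  · intro h p hp hpa
    rw [← pow_one p, pow_dvd_iff_le_count_normalizedFactors hp ha] at hpa
    rw [pow_dvd_iff_le_count_normalizedFactors hp ha]
    have := h (normalize p)
    omega

/-- `∏ p ^ g (v_p a)` over the normalized primes `p`, where `v_p a` is the multiplicity of `p`
in `a`. -/
noncomputable def mapMultiplicity (g : ℕ → ℕ) (hg : g 0 = 0) (a : α) : α :=
  (Finsupp.toMultiset ((toFinsupp (normalizedFactors a)).mapRange g hg)).prod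

variable (g : ℕ → ℕ) (hg : g 0 = 0) (a : α)

theorem mem_normalizedFactors_of_mem_toMultiset_mapRange {p : α}
    (hp : p ∈ Finsupp.toMultiset ((toFinsupp (normalizedFactors a)).mapRange g hg)) :
    p ∈ normalizedFactors a := by
  rw [Finsupp.mem_toMultiset, Finsupp.mem_support_iff, Finsupp.mapRange_apply,
    toFinsupp_apply] at hp
  exact count_ne_zero.mp fun h => hp (by rw [h, hg])

theorem normalizedFactors_mapMultiplicity :
    normalizedFactors (mapMultiplicity g hg a) =
      Finsupp.toMultiset ((toFinsupp (normalizedFactors a)).mapRange g hg) := by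
  have hmem {p} := mem_normalizedFactors_of_mem_toMultiset_mapRange g hg a (p := p)
  rw [mapMultiplicity, normalizedFactors_prod_eq _ fun p hp =>
    irreducible_of_normalized_factor p (hmem hp)]
  exact (map_congr rfl fun p hp => normalize_normalized_factor p (hmem hp)).trans (map_id' _)

theorem count_normalizedFactors_mapMultiplicity (p : α) :
    count p (normalizedFactors (mapMultiplicity g hg a)) = g (count p (normalizedFactors a)) := by
  rw [normalizedFactors_mapMultiplicity, Finsupp.count_toMultiset, Finsupp.mapRange_apply,
    toFinsupp_apply]

theorem mapMultiplicity_ne_zero [Nontrivial α] [NoZeroDivisors α] :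
    mapMultiplicity g hg a ≠ 0 :=
  prod_ne_zero_of_prime _ fun p hp => prime_of_normalized_factor p
    (mem_normalizedFactors_of_mem_toMultiset_mapRange g hg a hp)

theorem normalize_mapMultiplicity :
    normalize (mapMultiplicity g hg a) = mapMultiplicity g hg a :=
  normalize_multiset_prod_eq_self fun p hp => normalize_normalized_factor p
    (mem_normalizedFactors_of_mem_toMultiset_mapRange g hg a hp)

end UniqueFactorizationMonoid

namespace MulChar

variable {R R' : Type*} [CommMonoid R] [CommRing R'] {χ : MulChar R R'}

theorem apply_sq_of_sq_eq_one (hχ : χ ^ 2 = 1) (a : R) : χ a ^ 2 = (1 : MulChar R R') a := by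
  rw [← χ.pow_apply' two_ne_zero, hχ]

theorem apply_pow_three_of_sq_eq_one (hχ : χ ^ 2 = 1) (a : R) : χ a ^ 3 = χ a := by
  rw [← χ.pow_apply' three_ne_zero, pow_succ, hχ, one_mul]

end MulChar

namespace Polynomial

open UniqueFactorizationMonoid Multiset

variable {F : Type*} [Field F]

theorem monic_iff_ne_zero_and_normalize_eq_self [DecidableEq F] {f : F[X]} :
    f.Monic ↔ f ≠ 0 ∧ normalize f = f :=
  ⟨fun hf => ⟨hf.ne_zero, hf.normalize_eq_self⟩, fun ⟨h0, h⟩ => h ▸ monic_normalize h0⟩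

theorem Monic.eq_of_count_normalizedFactors_eq [DecidableEq F] {f g : F[X]} (hf : f.Monic)
    (hg : g.Monic) (h : ∀ p, count p (normalizedFactors f) = count p (normalizedFactors g)) :
    f = g :=
  UniqueFactorizationMonoid.eq_of_count_normalizedFactors_eq hf.ne_zero hg.ne_zero
    hf.normalize_eq_self hg.normalize_eq_self h

theorem monic_mapMultiplicity [DecidableEq F] (g : ℕ → ℕ) (hg : g 0 = 0) (f : F[X]) :
    (mapMultiplicity g hg f).Monic :=
  monic_iff_ne_zero_and_normalize_eq_self.mpr
    ⟨mapMultiplicity_ne_zero g hg f, normalize_mapMultiplicity g hg f⟩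

/-- At each prime the exponent `e` splits uniquely as `e % 2 + 2 * (e / 2)`. -/
theorem bijOn_mul_sq :
    BijOn (fun x : F[X] × F[X] => x.1 * x.2 ^ 2)
      ({b | b.Monic ∧ Squarefree b} ×ˢ {c | c.Monic}) {f | f.Monic} := by
  classical
  have count_mul_sq {b c : F[X]} (hb : b.Monic) (hc : c.Monic) (p : F[X]) :
      count p (normalizedFactors (b * c ^ 2)) =
        count p (normalizedFactors b) + 2 * count p (normalizedFactors c) := by
    rw [count_normalizedFactors_mul hb.ne_zero (hc.pow 2).ne_zero, count_normalizedFactors_pow]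
  refine ⟨fun x ⟨⟨hb, _⟩, hc⟩ => hb.mul (hc.pow 2), ?_, fun f hf => ?_⟩
  · rintro ⟨b, c⟩ ⟨⟨hb, hbs⟩, hc⟩ ⟨b', c'⟩ ⟨⟨hb', hbs'⟩, hc'⟩ h
    have hcount (p : F[X]) := count_mul_sq hb hc p ▸ count_mul_sq hb' hc' p ▸
      congrArg (fun f => count p (normalizedFactors f)) h
    have hb1 := (squarefree_iff_count_normalizedFactors_le_one hb.ne_zero).mp hbs
    have hb1' := (squarefree_iff_count_normalizedFactors_le_one hb'.ne_zero).mp hbs'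
    refine Prod.ext (hb.eq_of_count_normalizedFactors_eq hb' fun p => ?_)
      (hc.eq_of_count_normalizedFactors_eq hc' fun p => ?_) <;>
    · have := hcount p; have := hb1 p; have := hb1' p; simp only at *; omega
  · set b := mapMultiplicity (· % 2) rfl f
    set c := mapMultiplicity (· / 2) rfl f
    have hb : b.Monic := monic_mapMultiplicity _ _ f
    have hc : c.Monic := monic_mapMultiplicity _ _ f
    refine ⟨(b, c), ⟨⟨hb, ?_⟩, hc⟩, (hb.mul (hc.pow 2)).eq_of_count_normalizedFactors_eq hf
      fun p => ?_⟩
    · rw [squarefree_iff_count_normalizedFactors_le_one hb.ne_zero]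
      intro p
      rw [count_normalizedFactors_mapMultiplicity]
      omega
    · rw [count_mul_sq hb hc, count_normalizedFactors_mapMultiplicity,
        count_normalizedFactors_mapMultiplicity]
      omega

/-- An exponent `e` is `≠ 1` iff `e = 2 * i + 3 * j` with `j ≤ 1`, and then `j = e % 2`. -/
theorem bijOn_sq_mul_cube :
    BijOn (fun x : F[X] × F[X] => x.1 ^ 2 * x.2 ^ 3)
      ({a | a.Monic} ×ˢ {b | b.Monic ∧ Squarefree b}) {f | f.Monic ∧ IsSquareFullPoly f} := by
  classical
  have count_sq_mul_cube {a b : F[X]} (ha : a.Monic) (hb : b.Monic) (p : F[X]) :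
      count p (normalizedFactors (a ^ 2 * b ^ 3)) =
        2 * count p (normalizedFactors a) + 3 * count p (normalizedFactors b) := by
    rw [count_normalizedFactors_mul (ha.pow 2).ne_zero (hb.pow 3).ne_zero,
      count_normalizedFactors_pow, count_normalizedFactors_pow]
  have isSquareFull_iff {f : F[X]} (hf : f.Monic) :
      IsSquareFullPoly f ↔ ∀ p, count p (normalizedFactors f) ≠ 1 :=
    forall_sq_dvd_iff_count_normalizedFactors_ne_one hf.ne_zero
  refine ⟨fun x ⟨ha, hb, _⟩ => ?_, ?_, fun f ⟨hf, hsf⟩ => ?_⟩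
  · refine ⟨(ha.pow 2).mul (hb.pow 3), (isSquareFull_iff ((ha.pow 2).mul (hb.pow 3))).mpr
      fun p => ?_⟩
    rw [count_sq_mul_cube ha hb]
    omega
  · rintro ⟨a, b⟩ ⟨ha, hb, hbs⟩ ⟨a', b'⟩ ⟨ha', hb', hbs'⟩ h
    have hcount (p : F[X]) := count_sq_mul_cube ha hb p ▸ count_sq_mul_cube ha' hb' p ▸
      congrArg (fun f => count p (normalizedFactors f)) h
    have hb1 := (squarefree_iff_count_normalizedFactors_le_one hb.ne_zero).mp hbs
    have hb1' := (squarefree_iff_count_normalizedFactors_le_one hb'.ne_zero).mp hbs'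
    refine Prod.ext (ha.eq_of_count_normalizedFactors_eq ha' fun p => ?_)
      (hb.eq_of_count_normalizedFactors_eq hb' fun p => ?_) <;>
    · have := hcount p; have := hb1 p; have := hb1' p; simp only at *; omega
  · set a := mapMultiplicity (fun e => (e - 3 * (e % 2)) / 2) rfl f
    set b := mapMultiplicity (· % 2) rfl f
    have ha : a.Monic := monic_mapMultiplicity _ _ f
    have hb : b.Monic := monic_mapMultiplicity _ _ f
    refine ⟨(a, b), ⟨ha, hb, ?_⟩, ((ha.pow 2).mul (hb.pow 3)).eq_of_count_normalizedFactors_eq hf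
      fun p => ?_⟩
    · rw [squarefree_iff_count_normalizedFactors_le_one hb.ne_zero]
      intro p
      rw [count_normalizedFactors_mapMultiplicity]
      omega
    · have := (isSquareFull_iff hf).mp hsf p
      rw [count_sq_mul_cube ha hb, count_normalizedFactors_mapMultiplicity,
        count_normalizedFactors_mapMultiplicity]
      omega

theorem isUnit_quotient_mk_iff_not_dvd {Q : F[X]} (hQ : Irreducible Q) (f : F[X]) :
    IsUnit (Ideal.Quotient.mk (Ideal.span {Q}) f) ↔ ¬Q ∣ f := by
  have : (Ideal.span {Q}).IsMaximal := PrincipalIdealRing.isMaximal_of_irreducible hQ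
  let : Field (F[X] ⧸ Ideal.span {Q}) := Ideal.Quotient.field _
  rw [isUnit_iff_ne_zero, ne_eq, Ideal.Quotient.eq_zero_iff_mem, Ideal.mem_span_singleton]

theorem bijOn_mul_of_monic {P : F[X]} (hP : P.Monic) :
    BijOn (fun x : F[X] × F[X] => x.1 * x.2) ({P} ×ˢ {f | f.Monic}) {f | f.Monic ∧ P ∣ f} := by
  refine ⟨?_, ?_, ?_⟩
  · rintro ⟨_, g⟩ ⟨rfl, hg⟩
    exact ⟨hP.mul hg, dvd_mul_right _ _⟩
  · rintro ⟨_, g⟩ ⟨rfl, -⟩ ⟨_, g'⟩ ⟨rfl, -⟩ h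
    exact Prod.ext rfl (mul_left_cancel₀ hP.ne_zero h)
  · rintro f ⟨hf, g, rfl⟩
    exact ⟨(P, g), ⟨rfl, hP.of_mul_monic_left hf⟩, rfl⟩

section FiniteField

variable [Fintype F]

theorem card_monic_natDegree_eq (n : ℕ) :
    Nat.card {f : F[X] // f.Monic ∧ f.natDegree = n} = Fintype.card F ^ n := by
  rw [Nat.card_congr ((monicEquivDegreeLT n).trans (degreeLTEquiv F n).toEquiv)]
  simp [Nat.card_eq_fintype_card]

theorem finite_setOf_monic_natDegree_eq (n : ℕ) :
    {f : F[X] | f.Monic ∧ f.natDegree = n}.Finite :=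
  Set.finite_coe_iff.mp <|
    Finite.of_equiv _ ((monicEquivDegreeLT n).trans (degreeLTEquiv F n).toEquiv).symm

theorem finite_monic_fibre {A : Set F[X]} (hA : ∀ f ∈ A, f.Monic) {k : ℕ} (hk : k ≠ 0)
    (n : ℕ) : {f ∈ A | k * f.natDegree = n}.Finite :=
  (finite_setOf_monic_natDegree_eq (n / k)).subset fun f ⟨hf, hn⟩ =>
    ⟨hA f hf, by rw [← hn, Nat.mul_div_cancel_left _ (Nat.pos_of_ne_zero hk)]⟩

end FiniteField

end Polynomial

section LFunction

open PowerSeries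
open scoped Polynomial

variable {F : Type} [Field F] [Fintype F] (Q : F[X])

theorem Lpow_eq_expand (χ : MulChar (F[X] ⧸ Ideal.span {Q}) ℂ) {k : ℕ} (hk : k ≠ 0) :
    Lpow Q χ k = expand k hk (genSeries {f | f.Monic} Polynomial.natDegree
      fun f => χ (Ideal.Quotient.mk (Ideal.span {Q}) f)) := by
  ext n
  rw [Lpow, coeff_mk, coeff_expand, coeff_genSeries]
  split_ifs
  · exact finsum_subtype_eq_finsum_cond (f := fun f => χ (Ideal.Quotient.mk (Ideal.span {Q}) f)) _
  · rfl

/-- With `P` the monic associate of `Q` and `G = ∑_{f monic} u ^ deg f = Z(u)`, the monic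
multiples of `P` contribute `u ^ deg P * G` to `G` and the others contribute `L(u, χ₀)`. -/
theorem genSeries_one_mul_one_sub (hQ : Irreducible Q) :
    genSeries {f | f.Monic} Polynomial.natDegree
        (fun f => (1 : MulChar (F[X] ⧸ Ideal.span {Q}) ℂ) (Ideal.Quotient.mk (Ideal.span {Q}) f)) *
        (1 - C (Fintype.card F : ℂ) * X) = 1 - X ^ Q.natDegree := by
  set M : Set F[X] := {f | f.Monic}
  have hM (n : ℕ) : {f ∈ M | f.natDegree = n}.Finite :=
    Polynomial.finite_setOf_monic_natDegree_eq n
  set P := Q * Polynomial.C Q.leadingCoeff⁻¹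
  have hP : P.Monic := Polynomial.monic_mul_leadingCoeff_inv hQ.ne_zero
  have hQP : Associated Q P := associated_mul_unit_right _ _ (Polynomial.isUnit_C.mpr
    (inv_ne_zero (Polynomial.leadingCoeff_ne_zero.mpr hQ.ne_zero)).isUnit)
  set G := genSeries M Polynomial.natDegree fun _ => (1 : ℂ)
  have hG : G * (1 - C (Fintype.card F : ℂ) * X) = 1 := by
    convert mk_pow_mul_one_sub_C_mul_X (Fintype.card F : ℂ)
    ext n
    rw [coeff_genSeries, coeff_mk, ← Nat.cast_one, ← Nat.cast_finsum_mem (hM n), finsum_one,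
      ← Nat.card_coe_set_eq]
    exact_mod_cast Polynomial.card_monic_natDegree_eq n
  have hmultiples :
      X ^ Q.natDegree * G = genSeries {f ∈ M | P ∣ f} Polynomial.natDegree fun _ => 1 := by
    rw [← Polynomial.natDegree_mul_leadingCoeff_inv Q hQ.ne_zero, X_pow_eq,
      ← genSeries_singleton P Polynomial.natDegree fun _ => (1 : ℂ)]
    refine genSeries_mul_genSeries (Polynomial.bijOn_mul_of_monic hP) ?_
      (fun _ _ => (mul_one 1).symm) (fun _ => (finite_singleton P).subset (sep_subset _ _)) hM
    rintro ⟨_, g⟩ ⟨rfl, hg⟩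
    exact hP.natDegree_mul hg
  have hcoprime : genSeries M Polynomial.natDegree
      (fun f => (1 : MulChar (F[X] ⧸ Ideal.span {Q}) ℂ) (Ideal.Quotient.mk (Ideal.span {Q}) f)) =
      genSeries {f ∈ M | ¬P ∣ f} Polynomial.natDegree fun _ => 1 := by
    rw [← genSeries_sep_add_genSeries_sep_not _ (P ∣ ·) hM, genSeries_congr (v' := 0),
      genSeries_zero, zero_add, genSeries_congr (v' := fun _ => 1)]
    · exact fun f hf => MulChar.one_apply
        ((Polynomial.isUnit_quotient_mk_iff_not_dvd hQ f).mpr (hQP.dvd_iff_dvd_left.not.mpr hf.2))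
    · exact fun f hf => MulChar.map_nonunit _ (by
        rw [Polynomial.isUnit_quotient_mk_iff_not_dvd hQ f, not_not]
        exact hQP.dvd_iff_dvd_left.mpr hf.2)
  have hsplit := genSeries_sep_add_genSeries_sep_not (fun _ => (1 : ℂ)) (P ∣ ·) hM
  rw [hcoprime]
  linear_combination (1 - X ^ Q.natDegree) * hG +
    (1 - C (Fintype.card F : ℂ) * X) * (hsplit + hmultiples)

theorem Lpow_one_mul_one_sub (hQ : Irreducible Q) {k : ℕ} (hk : k ≠ 0) :
    Lpow Q 1 k * (1 - C (Fintype.card F : ℂ) * X ^ k) = 1 - X ^ (k * Q.natDegree) := by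
  have := congrArg (expand k hk) (genSeries_one_mul_one_sub Q hQ)
  rwa [map_mul, map_sub, map_one, map_mul, expand_C, expand_X, map_sub, map_one, map_pow,
    expand_X, ← pow_mul, ← Lpow_eq_expand Q 1 hk] at this

variable {Q} {χ : MulChar (F[X] ⧸ Ideal.span {Q}) ℂ}

theorem Lpow_three_eq (hχ : χ ^ 2 = 1) :
    Lpow Q χ 3 = genSeries {b | b.Monic ∧ Squarefree b} (fun b => 3 * b.natDegree)
      (fun b => χ (Ideal.Quotient.mk (Ideal.span {Q}) b)) * Lpow Q 1 6 := by
  rw [Lpow_eq_expand Q χ three_ne_zero, Lpow_eq_expand Q 1 (by norm_num), expand_genSeries,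
    expand_genSeries]
  refine (genSeries_mul_genSeries Polynomial.bijOn_mul_sq ?_ ?_
    (Polynomial.finite_monic_fibre (fun _ h => h.1) three_ne_zero)
    (Polynomial.finite_monic_fibre (fun _ h => h) (by norm_num))).symm
  · rintro ⟨b, c⟩ ⟨⟨hb, -⟩, hc⟩
    simp only [hb.natDegree_mul (hc.pow 2), hc.natDegree_pow]
    ring
  · rintro ⟨b, c⟩ -
    simp only [map_mul, map_pow, MulChar.apply_sq_of_sq_eq_one hχ]

theorem mk_finsum_squareFull_eq (hχ : χ ^ 2 = 1) :
    (PowerSeries.mk fun n =>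
        ∑ᶠ f : {f : F[X] // f.Monic ∧ f.natDegree = n ∧ IsSquareFullPoly f},
          χ (Ideal.Quotient.mk (Ideal.span {Q}) f.1)) =
      Lpow Q 1 2 * genSeries {b | b.Monic ∧ Squarefree b} (fun b => 3 * b.natDegree)
        (fun b => χ (Ideal.Quotient.mk (Ideal.span {Q}) b)) := by
  have hmk : (PowerSeries.mk fun n =>
      ∑ᶠ f : {f : F[X] // f.Monic ∧ f.natDegree = n ∧ IsSquareFullPoly f},
        χ (Ideal.Quotient.mk (Ideal.span {Q}) f.1)) =
      genSeries {f | f.Monic ∧ IsSquareFullPoly f} Polynomial.natDegree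
        (fun f => χ (Ideal.Quotient.mk (Ideal.span {Q}) f)) := by
    ext n
    rw [coeff_mk, coeff_genSeries,
      finsum_subtype_eq_finsum_cond (f := fun f => χ (Ideal.Quotient.mk (Ideal.span {Q}) f))]
    exact finsum_mem_congr (by ext; exact (and_congr_right fun _ => and_comm).trans and_assoc.symm)
      fun _ _ => rfl
  rw [hmk, Lpow_eq_expand Q 1 two_ne_zero, expand_genSeries]
  refine (genSeries_mul_genSeries Polynomial.bijOn_sq_mul_cube ?_ ?_
    (Polynomial.finite_monic_fibre (fun _ h => h) two_ne_zero)
    (Polynomial.finite_monic_fibre (fun _ h => h.1) three_ne_zero)).symm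
  · rintro ⟨a, b⟩ ⟨ha, hb, -⟩
    simp only [(ha.pow 2).natDegree_mul (hb.pow 3), ha.natDegree_pow, hb.natDegree_pow]
  · rintro ⟨a, b⟩ -
    simp only [map_mul, map_pow, MulChar.apply_sq_of_sq_eq_one hχ,
      MulChar.apply_pow_three_of_sq_eq_one hχ]

end LFunction

theorem quadratic_char_generating_function_general (F : Type) [Field F] [Fintype F]
    (Q : Polynomial F) (hQ : Irreducible Q)
    (χ₂ : MulChar (Polynomial F ⧸ Ideal.span {Q}) ℂ)
    (hχ : χ₂ ^ 2 = 1) :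
    Lpow Q χ₂ 3 *
        (1 - PowerSeries.C (Fintype.card F : ℂ) * PowerSeries.X ^ 2)⁻¹ *
        (1 - (PowerSeries.X : PowerSeries ℂ) ^ (2 * Q.natDegree)) *
        (1 - PowerSeries.C (Fintype.card F : ℂ) * PowerSeries.X ^ 6) *
        (1 - (PowerSeries.X : PowerSeries ℂ) ^ (6 * Q.natDegree))⁻¹ =
      PowerSeries.mk fun n =>
        ∑ᶠ f : {f : Polynomial F // f.Monic ∧ f.natDegree = n ∧ IsSquareFullPoly f},
          χ₂ (Ideal.Quotient.mk (Ideal.span {Q}) f.1) := by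
  open PowerSeries in
  set B := genSeries {b : Polynomial F | b.Monic ∧ Squarefree b} (fun b => 3 * b.natDegree)
    fun b => χ₂ (Ideal.Quotient.mk (Ideal.span {Q}) b)
  set Z₂ : PowerSeries ℂ := 1 - C (Fintype.card F : ℂ) * X ^ 2
  set E₆ : PowerSeries ℂ := 1 - X ^ (6 * Q.natDegree)
  have hZ₂ : Z₂ * Z₂⁻¹ = 1 := PowerSeries.mul_inv_cancel _ (by simp [Z₂])
  have hE₆ : E₆ * E₆⁻¹ = 1 :=
    PowerSeries.mul_inv_cancel _ (by simp [E₆, hQ.natDegree_pos.ne'])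
  rw [Lpow_three_eq hχ, mk_finsum_squareFull_eq hχ, ← Lpow_one_mul_one_sub Q hQ two_ne_zero]
  calc _ = B * Lpow Q 1 2 * (Z₂ * Z₂⁻¹) *
        (Lpow Q 1 6 * (1 - C (Fintype.card F : ℂ) * X ^ 6) * E₆⁻¹) := by ring
    _ = Lpow Q 1 2 * B := by rw [hZ₂, Lpow_one_mul_one_sub Q hQ (by norm_num), hE₆]; ring

/-- For `Q` a prime polynomial over `F_q` (`q` odd) and `χ₂` the quadratic character
mod `Q`, the generating function `L(u³,χ₂) · Z(u²)(1-u^{2 deg Q}) / (Z(u⁶)(1-u^{6 deg Q}))`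
has `n`-th coefficient `Σ_{f ∈ M_n} α₂(f) χ₂(f)`, where `α₂` is the indicator of
square-full polynomials and `Z(u) = (1-qu)⁻¹`. -/
theorem quadratic_char_generating_function (F : Type) [Field F] [Fintype F]
    (hq : Odd (Fintype.card F)) (Q : Polynomial F) (hQ : Irreducible Q)
    (χ₂ : MulChar (Polynomial F ⧸ Ideal.span {Q}) ℂ)
    (hχ : χ₂ ^ 2 = 1) (hχ1 : χ₂ ≠ 1) :
    Lpow Q χ₂ 3 *
        (1 - PowerSeries.C (Fintype.card F : ℂ) * PowerSeries.X ^ 2)⁻¹ *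
        (1 - (PowerSeries.X : PowerSeries ℂ) ^ (2 * Q.natDegree)) *
        (1 - PowerSeries.C (Fintype.card F : ℂ) * PowerSeries.X ^ 6) *
        (1 - (PowerSeries.X : PowerSeries ℂ) ^ (6 * Q.natDegree))⁻¹ =
      PowerSeries.mk fun n =>
        ∑ᶠ f : {f : Polynomial F // f.Monic ∧ f.natDegree = n ∧ IsSquareFullPoly f},
          χ₂ (Ideal.Quotient.mk (Ideal.span {Q}) f.1) :=
  quadratic_char_generating_function_general F Q hQ χ₂ hχ
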